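/- The syntactic chart (StExp, δ) is locally finite: for every 1-free star expression r ∈ StExp, the set of expressions reachable from r under the transition relation → of the syntactic chart is finite. -/
import Mathlib


/-- A chart over action alphabet `Act` with state space `X`: each state is assigned a
finite set of transitions, either `(a, none)` (i.e. `x →a ✓`) or `(a, some y)` (i.e. `x →a y`). -/
structure Chart (Act X : Type) where
  tr : X → Finset (Act × Option X)

/-- `x →a ✓` in the chart `C`. -/
def Chart.Halts {Act X : Type} (C : Chart Act X) (x : X) : Prop :=
  ∃ a : Act, (a, (none : Option X)) ∈ C.tr x

/-- `x → y` (for some action) in the chart `C`. -/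
def Chart.StepRel {Act X : Type} (C : Chart Act X) (x y : X) : Prop :=
  ∃ a : Act, (a, some y) ∈ C.tr x

/-- `R` is a bisimulation between the charts `C` and `D`. -/
def IsBisim {Act X Y : Type} (C : Chart Act X) (D : Chart Act Y) (R : X → Y → Prop) : Prop :=
  ∀ x y, R x y → ∀ a : Act,
    (((a, (none : Option X)) ∈ C.tr x) ↔ ((a, (none : Option Y)) ∈ D.tr y)) ∧
    (∀ x', (a, some x') ∈ C.tr x → ∃ y', (a, some y') ∈ D.tr y ∧ R x' y') ∧
    (∀ y', (a, some y') ∈ D.tr y → ∃ x', (a, some x') ∈ C.tr x ∧ R x' y')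

/-- States `x` of `C` and `y` of `D` are bisimilar. -/
def Bisimilar {Act X Y : Type} (C : Chart Act X) (D : Chart Act Y) (x : X) (y : Y) : Prop :=
  ∃ R, IsBisim C D R ∧ R x y

/-- A chart homomorphism is a function whose graph is a bisimulation. -/
def IsChartHom {Act X Y : Type} (C : Chart Act X) (D : Chart Act Y) (h : X → Y) : Prop :=
  IsBisim C D (fun x y => h x = y)

/-- 1-free star expressions over the alphabet `Act`. -/
inductive StExp (Act : Type) : Type where
  | zero : StExp Act
  | act : Act → StExp Act
  | add : StExp Act → StExp Act → StExp Act
  | mul : StExp Act → StExp Act → StExp Act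
  | star : StExp Act → StExp Act → StExp Act
deriving DecidableEq

/-- Continuation after a transition of the left operand: `✓` continues as `s`,
and a state `t` continues as `t·s`. -/
def StExp.seqAfter {Act : Type} (s : StExp Act) : Option (StExp Act) → StExp Act
  | none => s
  | some t => t.mul s

/-- The transition function of the syntactic chart, following Antimirov-style rules. -/
def StExp.tr {Act : Type} [DecidableEq Act] : StExp Act → Finset (Act × Option (StExp Act))
  | .zero => ∅
  | .act a => {(a, none)}
  | .add r s => r.tr ∪ s.tr
  | .mul r s => r.tr.image (fun p => (p.1, some (StExp.seqAfter s p.2)))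
  | .star r s =>
      (r.tr.image (fun p => (p.1, some (StExp.seqAfter (StExp.star r s) p.2)))) ∪ s.tr

/-- The syntactic chart `(StExp, δ)`. -/
def synChart (Act : Type) [DecidableEq Act] : Chart Act (StExp Act) := ⟨StExp.tr⟩

/-- A finite overapproximation of the set of states reachable from an expression. -/
def StExp.cl {Act : Type} [DecidableEq Act] : StExp Act → Finset (StExp Act)
  | .zero => {.zero}
  | .act a => {.act a}
  | .add r s => insert (StExp.add r s) (r.cl ∪ s.cl)
  | .mul r s => r.cl.image (·.mul s) ∪ s.cl
  | .star r s => insert (StExp.star r s) (r.cl.image (·.mul (StExp.star r s)) ∪ s.cl)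

lemma StExp.mem_cl {Act : Type} [DecidableEq Act] (r : StExp Act) : r ∈ r.cl := by
  induction r with
  | zero => simp [cl]
  | act a => simp [cl]
  | add r s ihr ihs => simp [cl]
  | mul r s ihr ihs => simp only [cl, Finset.mem_union, Finset.mem_image]; exact Or.inl ⟨r, ihr, rfl⟩
  | star r s ihr ihs => simp [cl]

lemma StExp.cl_closed {Act : Type} [DecidableEq Act] (r : StExp Act) :
    ∀ s ∈ r.cl, ∀ a t, (a, some t) ∈ s.tr → t ∈ r.cl := by
  induction r with
  | zero =>
    intro s hs a t ht
    simp only [cl, Finset.mem_singleton] at hs; subst hs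
    simp [tr] at ht
  | act b =>
    intro s hs a t ht
    simp only [cl, Finset.mem_singleton] at hs; subst hs
    simp [tr] at ht
  | add r s ihr ihs =>
    intro u hu a t ht
    simp only [cl, Finset.mem_insert, Finset.mem_union] at hu ⊢
    rcases hu with rfl | hu | hu
    · simp only [tr, Finset.mem_union] at ht
      rcases ht with h | h
      · exact Or.inr (Or.inl (ihr r r.mem_cl a t h))
      · exact Or.inr (Or.inr (ihs s s.mem_cl a t h))
    · exact Or.inr (Or.inl (ihr u hu a t ht))
    · exact Or.inr (Or.inr (ihs u hu a t ht))
  | mul r s ihr ihs =>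
    intro u hu a t ht
    simp only [cl, Finset.mem_union, Finset.mem_image] at hu ⊢
    rcases hu with ⟨v, hv, rfl⟩ | hu
    · simp only [tr, Finset.mem_image, Prod.mk.injEq] at ht
      rcases ht with ⟨⟨b, o⟩, hp, rfl, h2⟩
      cases o with
      | none =>
        simp only [seqAfter, Option.some.injEq] at h2; subst h2
        exact Or.inr s.mem_cl
      | some w =>
        simp only [seqAfter, Option.some.injEq] at h2; subst h2
        exact Or.inl ⟨w, ihr v hv b w hp, rfl⟩
    · exact Or.inr (ihs u hu a t ht)
  | star r s ihr ihs =>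
    intro u hu a t ht
    simp only [cl, Finset.mem_insert, Finset.mem_union, Finset.mem_image] at hu ⊢
    rcases hu with rfl | ⟨v, hv, rfl⟩ | hu
    · simp only [tr, Finset.mem_union, Finset.mem_image, Prod.mk.injEq] at ht
      rcases ht with ⟨⟨b, o⟩, hp, rfl, h2⟩ | h
      · cases o with
        | none => simp only [seqAfter, Option.some.injEq] at h2; exact Or.inl h2.symm
        | some w =>
          simp only [seqAfter, Option.some.injEq] at h2; subst h2
          exact Or.inr (Or.inl ⟨w, ihr r r.mem_cl b w hp, rfl⟩)
      · exact Or.inr (Or.inr (ihs s s.mem_cl a t h))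
    · simp only [tr, Finset.mem_image, Prod.mk.injEq] at ht
      rcases ht with ⟨⟨b, o⟩, hp, rfl, h2⟩
      cases o with
      | none => simp only [seqAfter, Option.some.injEq] at h2; exact Or.inl h2.symm
      | some w =>
        simp only [seqAfter, Option.some.injEq] at h2; subst h2
        exact Or.inr (Or.inl ⟨w, ihr v hv b w hp, rfl⟩)
    · exact Or.inr (Or.inr (ihs u hu a t ht))

/-- The syntactic chart is locally finite: the set of expressions reachable from any
1-free star expression `r` under the transition relation is finite. -/
theorem synChart_locally_finite {Act : Type} [DecidableEq Act] (r : StExp Act) :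
    {s : StExp Act | Relation.ReflTransGen ((synChart Act).StepRel) r s}.Finite := by
  apply Set.Finite.subset (r.cl : Finset (StExp Act)).finite_toSet
  intro s hs
  simp only [Set.mem_setOf_eq] at hs
  induction hs with
  | refl => exact r.mem_cl
  | tail _ hstep ih =>
    rcases hstep with ⟨a, ha⟩
    exact r.cl_closed _ ih a _ ha
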